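/- arXiv:2507.20360 — 2 statements merged into one kernel-verified Lean document; each statement's English description precedes it below -/
import Mathlib

section
/- Let X be a set with binary operations ⊴, ⊵ : X × X → X. Then the following are equivalent: (1) for every y ∈ X the maps α_y(x) = x ⊵ y and β_y(x) = x ⊴ y are bijections of X, and the map S(x, y) = (y ⊵ x, x ⊴ y) is a bijection of X × X; (2) each of the three maps X × X → X × X given by (x, y) ↦ (y, x ⊴ y), (x, y) ↦ (x ⊴ y, y ⊵ x), and (x, y) ↦ (y ⊵ x, x) is a bijection (the adjacent labels rule: in the ordered quadruple (x, y, x ⊴ y, y ⊵ x), any two neighboring entries, including the pair (y ⊵ x, x), determine the other two). -/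
private lemma aux1 {X : Type*} (f : X → X → X) :
    Function.Bijective (fun p : X × X => (p.2, f p.1 p.2)) ↔
    ∀ y : X, Function.Bijective (fun x => f x y) := by
  constructor
  · rintro ⟨hi, hs⟩ y
    constructor
    · intro a b hab
      have hab' : f a y = f b y := hab
      have : ((a, y) : X × X) = (b, y) := hi (show (y, f a y) = (y, f b y) by rw [hab'])
      exact (Prod.ext_iff.mp this).1
    · intro z
      obtain ⟨p, hp⟩ := hs (y, z)
      obtain ⟨h1, h2⟩ := Prod.ext_iff.mp hp
      exact ⟨p.1, by simp_all⟩
  · intro h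
    constructor
    · rintro ⟨a, b⟩ ⟨c, d⟩ hab
      obtain ⟨h1, h2⟩ := Prod.ext_iff.mp hab
      simp only at h1 h2
      subst h1
      exact Prod.ext ((h b).1 h2) rfl
    · rintro ⟨y, z⟩
      obtain ⟨x, hx⟩ := (h y).2 z
      exact ⟨(x, y), by simp [hx]⟩

private lemma aux2 {X : Type*} (f : X → X → X) :
    Function.Bijective (fun p : X × X => (f p.2 p.1, p.1)) ↔
    ∀ y : X, Function.Bijective (fun x => f x y) := by
  constructor
  · rintro ⟨hi, hs⟩ y
    constructor
    · intro a b hab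
      have hab' : f a y = f b y := hab
      have : ((y, a) : X × X) = (y, b) := hi (show (f a y, y) = (f b y, y) by rw [hab'])
      exact (Prod.ext_iff.mp this).2
    · intro z
      obtain ⟨p, hp⟩ := hs (z, y)
      obtain ⟨h1, h2⟩ := Prod.ext_iff.mp hp
      exact ⟨p.2, by simp_all⟩
  · intro h
    constructor
    · rintro ⟨a, b⟩ ⟨c, d⟩ hab
      obtain ⟨h1, h2⟩ := Prod.ext_iff.mp hab
      simp only at h1 h2
      subst h2
      exact Prod.ext rfl ((h a).1 h1)
    · rintro ⟨z, y⟩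
      obtain ⟨x, hx⟩ := (h y).2 z
      exact ⟨(y, x), by simp [hx]⟩

private lemma auxswap {X : Type*} (f g : X × X → X) :
    Function.Bijective (fun p : X × X => (f p, g p)) ↔
    Function.Bijective (fun p : X × X => (g p, f p)) := by
  constructor <;> intro h <;>
    exact (Equiv.prodComm X X).bijective.comp h

theorem biquandle_adjacent_labels_rule {X : Type*} (tle tre : X → X → X) :
    ((∀ y : X, Function.Bijective (fun x => tre x y)) ∧
     (∀ y : X, Function.Bijective (fun x => tle x y)) ∧
     Function.Bijective (fun p : X × X => (tre p.2 p.1, tle p.1 p.2)))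
    ↔
    (Function.Bijective (fun p : X × X => (p.2, tle p.1 p.2)) ∧
     Function.Bijective (fun p : X × X => (tle p.1 p.2, tre p.2 p.1)) ∧
     Function.Bijective (fun p : X × X => (tre p.2 p.1, p.1))) := by
  rw [aux1 tle, aux2 tre,
    auxswap (fun p : X × X => tle p.1 p.2) (fun p : X × X => tre p.2 p.1)]
  tauto
end

section
/- Let W : ZMod 9 × ZMod 9 → ZMod 3 be the weight function W(c, d) = θ(c, d, d▷c) − θ(c▷d, c, d▷c) − θ(d, c, d▷c) + θ(c▷d, d, c▷d) − θ(c\bar{▷}d, d▷c, d) + θ(c\bar{▷}d, c, d) + θ(d, c, d) − θ(c\bar{▷}d, d, c), where x ▷ y = 4x + 6y and c \bar{▷} d = 7c + 3d on ZMod 9 and θ is 1 exactly on the nine triples (0,1,4), (3,1,4), (6,1,4), (0,4,7), (3,4,7), (6,4,7), (0,7,1), (3,7,1), (6,7,1) and 0 elsewhere. Then in the integral group ring ℤ[ℤ/3] of the multiplicative cyclic group ⟨t | t³ = 1⟩ (i.e., the monoid algebra of Multiplicative (ZMod 3) over ℤ), the sum over all 81 pairs (c, d) ∈ (ZMod 9)²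 of t^{W(c, d)} equals 72 + 9t. -/
/-- The quandle operation `x ▷ y = 4x + 6y` on `ZMod 9`. -/
def fr_op (x y : ZMod 9) : ZMod 9 := 4 * x + 6 * y

/-- The left-inverse operation `c \bar{▷} d = 7c + 3d` on `ZMod 9`. -/
def fr_inv_op (c d : ZMod 9) : ZMod 9 := 7 * c + 3 * d

/-- The singular 3-cocycle `θ_S` of the paper, written additively with values in `ZMod 3`. -/
def thetaS (p : ZMod 9 × ZMod 9 × ZMod 9) : ZMod 3 :=
  if p = (0, 1, 4) ∨ p = (3, 1, 4) ∨ p = (6, 1, 4) ∨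
     p = (0, 4, 7) ∨ p = (3, 4, 7) ∨ p = (6, 4, 7) ∨
     p = (0, 7, 1) ∨ p = (3, 7, 1) ∨ p = (6, 7, 1) then 1 else 0

/-- The state-sum weight of the coloring of the Fenn--Rolfsen link generated by `c, d`. -/
def frWeight (c d : ZMod 9) : ZMod 3 :=
  thetaS (c, d, fr_op d c) - thetaS (fr_op c d, c, fr_op d c)
    - thetaS (d, c, fr_op d c) + thetaS (fr_op c d, d, fr_op c d)
    - thetaS (fr_inv_op c d, fr_op d c, d) + thetaS (fr_inv_op c d, c, d)
    + thetaS (d, c, d) - thetaS (fr_inv_op c d, d, c)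

/-- `t^n` in the integral group ring `ℤ[ℤ/3]` of `⟨t | t³ = 1⟩`, for `n : ZMod 3`. -/
noncomputable def tPow (n : ZMod 3) : MonoidAlgebra ℤ (Multiplicative (ZMod 3)) :=
  MonoidAlgebra.single (Multiplicative.ofAdd n) 1


lemma tPow_zero : tPow 0 = 1 := rfl

lemma frw_card : (Finset.univ.filter (fun p : ZMod 9 × ZMod 9 => frWeight p.1 p.2 = 1)).card = 9 := by decide

lemma frw_vals : ∀ p : ZMod 9 × ZMod 9, frWeight p.1 p.2 = 0 ∨ frWeight p.1 p.2 = 1 := by decide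

theorem fr_state_sum :
    ∑ p : ZMod 9 × ZMod 9, tPow (frWeight p.1 p.2) = 72 + 9 * tPow 1 := by
  have h : ∀ p : ZMod 9 × ZMod 9,
      tPow (frWeight p.1 p.2) = if frWeight p.1 p.2 = 1 then tPow 1 else 1 := by
    intro p
    rcases frw_vals p with h | h <;> rw [h] <;> simp [tPow_zero]
  rw [Finset.sum_congr rfl (fun p _ => h p), Finset.sum_ite, Finset.sum_const, Finset.sum_const,
    frw_card]
  have : (Finset.univ.filter (fun p : ZMod 9 × ZMod 9 => ¬ frWeight p.1 p.2 = 1)).card = 72 := by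
    decide
  rw [this]
  ring
end
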